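/- Let K be a field and φ an automorphism of the local K-algebra K[[x₁,…,xₙ]]. Then for any f ∈ K[[x]], the Jacobian ideal satisfies j(φ(f)) = φ(j(f)). Consequently the Milnor number is invariant under right equivalence: μ(φ(f)) = μ(f). -/

import Mathlib

/-!
The chain rule `∂ⱼ(φ f) = Σᵢ φ(∂ᵢ f) · ∂ⱼ(φ xᵢ)` puts `j(φ f)` inside `φ(j(f))`; applied to `φ⁻¹`
it gives the reverse inclusion, and `φ` then induces a `K`-linear isomorphism
`K[[x]]/j(f) ≃ K[[x]]/j(φ f)`.

Both sides of the chain rule, as functions of `f`, are `φ`-twisted derivations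
(`L (f g) = φ f · L g + φ g · L f`) agreeing on the variables, so their difference `L` kills
polynomials. Since an automorphism preserves non-units, each `φ(xᵢ)` has zero constant term; writing
`f = p + Σᵢ xᵢᴺ gᵢ` with `p` a polynomial gives `L f = Σᵢ φ(xᵢ)ᴺ L gᵢ`, of order at least `N` for
every `N`, so `L f = 0`.
-/

open MvPowerSeries

/-- Formal partial derivative `∂f/∂xᵢ` of a multivariate formal power series. -/
noncomputable def pderiv {n : ℕ} {K : Type*} [Field K] (i : Fin n)
    (f : MvPowerSeries (Fin n) K) : MvPowerSeries (Fin n) K :=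
  fun d => ((d i : K) + 1) * coeff (d + Finsupp.single i 1) f

/-- The Jacobian ideal `j(f) = ⟨∂f/∂x₁, …, ∂f/∂xₙ⟩`. -/
noncomputable def jIdeal {n : ℕ} {K : Type*} [Field K]
    (f : MvPowerSeries (Fin n) K) : Ideal (MvPowerSeries (Fin n) K) :=
  Ideal.span (Set.range fun i => pderiv i f)

/-- The Tjurina ideal `tj(f) = ⟨f, ∂f/∂x₁, …, ∂f/∂xₙ⟩`. -/
noncomputable def tjIdeal {n : ℕ} {K : Type*} [Field K]
    (f : MvPowerSeries (Fin n) K) : Ideal (MvPowerSeries (Fin n) K) :=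
  Ideal.span (insert f (Set.range fun i => pderiv i f))

/-- The maximal ideal `⟨x₁, …, xₙ⟩` of `K[[x₁,…,xₙ]]`. -/
noncomputable def mIdeal (n : ℕ) (K : Type*) [Field K] : Ideal (MvPowerSeries (Fin n) K) :=
  Ideal.span (Set.range (X : Fin n → MvPowerSeries (Fin n) K))

namespace MvPowerSeries

variable {σ R : Type*} [CommRing R]

theorem exists_eq_coe_add_sum_X_pow_mul [Fintype σ] (f : MvPowerSeries σ R) (N : ℕ) :
    ∃ (p : MvPolynomial σ R) (g : σ → MvPowerSeries σ R), f = p + ∑ i, X i ^ N * g i := by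
  classical
  set p := trunc' R (Finsupp.equivFunOnFinite.symm fun _ => N - 1) f
  -- Outside the box `d ≤ (N - 1, …, N - 1)` some exponent `d j` is at least `N`; the piece
  -- `r i` collects the terms of `f - p` for which the chosen such `j` is `i`.
  let r : σ → MvPowerSeries σ R := fun i d =>
    if h : ∃ j, N ≤ d j then (if h.choose = i then coeff d (f - p) else 0) else 0
  have hr_dvd (i : σ) : X i ^ N ∣ r i := by
    refine X_pow_dvd_iff.2 fun d hd => ?_
    change dite _ _ _ = 0
    split_ifs with h hi
    · exact absurd (hi ▸ h.choose_spec) (not_le.2 hd)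
    all_goals rfl
  have hsum : f - p = ∑ i, r i := by
    ext d
    rw [map_sum]
    change _ = ∑ i, dite _ _ _
    by_cases h : ∃ j, N ≤ d j
    · simp only [dif_pos h, Finset.sum_ite_eq, Finset.mem_univ, if_true]
    · have hd : d ≤ Finsupp.equivFunOnFinite.symm fun _ => N - 1 := fun j => by
        have := not_exists.1 h j
        change d j ≤ N - 1
        omega
      simp only [dif_neg h, Finset.sum_const_zero, map_sub, p, coeff_trunc', if_pos hd,
        MvPolynomial.coeff_coe, sub_self]
  choose g hg using hr_dvd
  exact ⟨p, g, by rw [← sub_eq_iff_eq_add', hsum]; simp only [hg]⟩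

variable [Fintype σ] {φ : MvPowerSeries σ R →ₐ[R] MvPowerSeries σ R}

theorem linearMap_eq_zero_of_leibniz_of_map_X (hφ : ∀ i, constantCoeff (φ (X i)) = 0)
    (L : MvPowerSeries σ R →ₗ[R] MvPowerSeries σ R)
    (hL : ∀ f g, L (f * g) = φ f * L g + φ g * L f) (hX : ∀ i, L (X i) = 0) : L = 0 := by
  have hL_one : L 1 = 0 := by
    simpa only [mul_one, map_one, one_mul, left_eq_add] using hL 1 1
  have hL_poly (p : MvPolynomial σ R) : L p = 0 := by
    induction p using MvPolynomial.induction_on with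
    | C a => rw [MvPolynomial.coe_C, ← mul_one (C a), ← smul_eq_C_mul, map_smul, hL_one, smul_zero]
    | add p q hp hq => rw [MvPolynomial.coe_add, map_add, hp, hq, add_zero]
    | mul_X p i hp =>
      rw [MvPolynomial.coe_mul, MvPolynomial.coe_X, hL, hp, hX, mul_zero, mul_zero, add_zero]
  have hL_order (f : MvPowerSeries σ R) (N : ℕ) : (N : ℕ∞) ≤ (L f).order := by
    obtain ⟨p, g, rfl⟩ := exists_eq_coe_add_sum_X_pow_mul f N
    rw [map_add, hL_poly, zero_add, map_sum]
    refine Finset.sum_induction _ (fun h : MvPowerSeries σ R => (N : ℕ∞) ≤ h.order)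
      (fun a b ha hb => (le_min ha hb).trans min_order_le_add) (by simp) fun i _ => ?_
    have hL_X_pow : L (X i ^ N) = 0 := by
      rw [← MvPolynomial.coe_X, ← MvPolynomial.coe_pow, hL_poly]
    rw [hL, hL_X_pow, mul_zero, add_zero, map_pow]
    exact (le_order_pow_of_constantCoeff_eq_zero N (hφ i)).trans (le_self_add.trans le_order_mul)
  ext1 f
  exact order_eq_top_iff.1 (ENat.eq_top_iff_forall_ge.2 (hL_order f))

theorem derivation_apply_map_eq_sum_pderiv (hφ : ∀ i, constantCoeff (φ (X i)) = 0)
    (D : Derivation R (MvPowerSeries σ R) (MvPowerSeries σ R)) (f : MvPowerSeries σ R) :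
    D (φ f) = ∑ i, φ (pderiv R i f) * D (φ (X i)) := by
  classical
  let L : MvPowerSeries σ R →ₗ[R] MvPowerSeries σ R :=
    (D : _ →ₗ[R] _) ∘ₗ φ.toLinearMap -
      ∑ i, LinearMap.mulRight R (D (φ (X i))) ∘ₗ φ.toLinearMap ∘ₗ (pderiv R i : _ →ₗ[R] _)
  have hL (f : MvPowerSeries σ R) : L f = D (φ f) - ∑ i, φ (pderiv R i f) * D (φ (X i)) := by
    simp [L]
  have hL_mul (f g : MvPowerSeries σ R) : L (f * g) = φ f * L g + φ g * L f := by
    simp only [hL, map_mul, Derivation.leibniz, smul_eq_mul, map_add, add_mul,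
      Finset.sum_add_distrib, Finset.mul_sum, mul_sub, mul_assoc]
    ring
  have hL_X (j : σ) : L (X j) = 0 := by
    simp [hL, pderiv_X, Pi.single_apply]
  simpa [hL, sub_eq_zero] using LinearMap.congr_fun
    (linearMap_eq_zero_of_leibniz_of_map_X hφ L hL_mul hL_X) f

end MvPowerSeries

theorem pderiv_eq_mvPowerSeries_pderiv {n : ℕ} {K : Type*} [Field K] (i : Fin n)
    (f : MvPowerSeries (Fin n) K) : _root_.pderiv i f = MvPowerSeries.pderiv K i f := by
  ext d
  rw [MvPowerSeries.coeff_pderiv, mul_comm]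
  rfl

theorem constantCoeff_map_X_eq_zero {σ K F : Type*} [Field K]
    [FunLike F (MvPowerSeries σ K) (MvPowerSeries σ K)]
    [RingHomClass F (MvPowerSeries σ K) (MvPowerSeries σ K)] (φ : F) [IsLocalHom φ] (i : σ) :
    constantCoeff (φ (X i)) = 0 := by
  by_contra h
  have hX : IsUnit (X i : MvPowerSeries σ K) :=
    isUnit_of_map_unit φ _ (isUnit_iff_constantCoeff.2 (isUnit_iff_ne_zero.2 h))
  simpa using isUnit_iff_constantCoeff.1 hX

theorem jIdeal_map_le {n : ℕ} {K : Type*} [Field K]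
    (φ : MvPowerSeries (Fin n) K →ₐ[K] MvPowerSeries (Fin n) K)
    (hφ : ∀ i, constantCoeff (φ (X i)) = 0) (f : MvPowerSeries (Fin n) K) :
    jIdeal (φ f) ≤ (jIdeal f).map φ := by
  rw [jIdeal, Ideal.span_le]
  rintro _ ⟨j, rfl⟩
  change _root_.pderiv j (φ f) ∈ _
  rw [pderiv_eq_mvPowerSeries_pderiv, derivation_apply_map_eq_sum_pderiv hφ]
  refine Ideal.sum_mem _ fun i _ => Ideal.mul_mem_right _ _ (Ideal.mem_map_of_mem _ ?_)
  rw [← pderiv_eq_mvPowerSeries_pderiv]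
  exact Ideal.subset_span ⟨i, rfl⟩

theorem jIdeal_map_algEquiv {n : ℕ} {K : Type*} [Field K]
    (φ : MvPowerSeries (Fin n) K ≃ₐ[K] MvPowerSeries (Fin n) K) (f : MvPowerSeries (Fin n) K) :
    jIdeal (φ f) = (jIdeal f).map (φ : MvPowerSeries (Fin n) K →+* MvPowerSeries (Fin n) K) := by
  refine le_antisymm (jIdeal_map_le φ.toAlgHom (constantCoeff_map_X_eq_zero φ) f) ?_
  have h := jIdeal_map_le φ.symm.toAlgHom (constantCoeff_map_X_eq_zero φ.symm) (φ f)
  rw [AlgEquiv.toAlgHom_apply, φ.symm_apply_apply] at h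
  exact Ideal.map_le_iff_le_comap.2 (h.trans (Ideal.map_symm φ.toRingEquiv).le)

/-- For an automorphism `φ` of `K[[x]]`: `j(φ(f)) = φ(j(f))`, hence `μ` is a right invariant. -/
theorem stmt_11 {n : ℕ} {K : Type*} [Field K]
    (φ : MvPowerSeries (Fin n) K ≃ₐ[K] MvPowerSeries (Fin n) K)
    (f : MvPowerSeries (Fin n) K) :
    jIdeal (φ f) = (jIdeal f).map (φ : MvPowerSeries (Fin n) K →+* MvPowerSeries (Fin n) K) ∧
    Module.rank K (MvPowerSeries (Fin n) K ⧸ jIdeal (φ f)) =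
      Module.rank K (MvPowerSeries (Fin n) K ⧸ jIdeal f) := by
  have hj := jIdeal_map_algEquiv φ f
  exact ⟨hj, (Ideal.quotientEquivAlg (R₁ := K) _ _ φ hj).toLinearEquiv.rank_eq.symm⟩
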